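/- arXiv:2307.10539 — 2 statements merged into one kernel-verified Lean document; each statement's English description precedes it below -/
import Mathlib

section
/- Let W and G be finite groups, H a subgroup of G, and φ : H → W × W a group homomorphism such that (G,H,φ) has property (♦). If (C_0,…,C_n) is a sequence of finite-dimensional complex representations of W that is strongly inductively log-concave with respect to (G,H,φ), then the sequence (D_0,…,D_{n+1}) defined by D_k = C_{k−1} ⊕ C_k (with C_{−1} = C_{n+1} = 0), i.e. the coefficient sequence of the polynomial (t+1)·Σ_{i=0}^n C_i t^i, is also strongly inductively log-concave with respect to (G,H,φ). -/
open CategoryTheory CategoryTheory.Limits MonoidalCategory ZeroObject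

set_option maxHeartbeats 1000000

/-- The external tensor product `C ⊠ D` of two representations of `W`, which is a
representation of `W × W`, regarded as a representation of `H` via pullback
along a group homomorphism `φ : H →* W × W`. -/
noncomputable def extTensor {W H : Type} [Group W] [Group H] (φ : H →* W × W)
    (C D : Rep.{0} ℂ W) : Rep.{0} ℂ H :=
  Rep.of (MonoidHom.comp
    (Representation.tprod (MonoidHom.comp C.ρ (MonoidHom.fst W W))
      (MonoidHom.comp D.ρ (MonoidHom.snd W W))) φ)

/-- `Contains A B` : `B` is isomorphic to a direct summand of `A`. -/
def Contains {G : Type} [Group G] (A B : Rep.{0} ℂ G) : Prop :=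
  ∃ C : Rep.{0} ℂ G, Nonempty (A ≅ B ⊞ C)

section ContainsLemmas

variable {G : Type} [Group G]

lemma contains_of_iso {A A' B : Rep ℂ G} (e : A ≅ A') (h : Contains A' B) : Contains A B := by
  obtain ⟨X, ⟨e'⟩⟩ := h; exact ⟨X, ⟨e.trans e'⟩⟩

lemma contains_iso_right {A B B' : Rep ℂ G} (h : Contains A B) (e : B ≅ B') : Contains A B' := by
  obtain ⟨X, ⟨e'⟩⟩ := h; exact ⟨X, ⟨e'.trans (biprod.mapIso e (Iso.refl X))⟩⟩

lemma contains_refl (A : Rep ℂ G) : Contains A A :=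
  ⟨0, ⟨isoBiprodZero (isZero_zero _)⟩⟩

lemma contains_of_isZero {A B : Rep ℂ G} (h : IsZero B) : Contains A B :=
  ⟨A, ⟨isoZeroBiprod h⟩⟩

lemma contains_trans {A B C : Rep ℂ G} (h1 : Contains A B) (h2 : Contains B C) :
    Contains A C := by
  obtain ⟨X, ⟨e1⟩⟩ := h1; obtain ⟨Y, ⟨e2⟩⟩ := h2
  exact ⟨Y ⊞ X, ⟨(e1.trans (biprod.mapIso e2 (Iso.refl X))).trans (biprod.associator _ _ _)⟩⟩

/-- The middle-four-exchange isomorphism for binary biproducts. -/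
noncomputable def biprodShuffle (a b c d : Rep ℂ G) :
    (a ⊞ b) ⊞ (c ⊞ d) ≅ (a ⊞ c) ⊞ (b ⊞ d) :=
  (biprod.associator a b (c ⊞ d)).trans <|
    (biprod.mapIso (Iso.refl a) (((biprod.associator b c d).symm.trans
      (biprod.mapIso (biprod.braiding b c) (Iso.refl d))).trans
        (biprod.associator c b d))).trans
      (biprod.associator a c (b ⊞ d)).symm

lemma contains_map {A B A' B' : Rep ℂ G} (h1 : Contains A A') (h2 : Contains B B') :
    Contains (A ⊞ B) (A' ⊞ B') := by
  obtain ⟨X, ⟨e1⟩⟩ := h1; obtain ⟨Y, ⟨e2⟩⟩ := h2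
  exact ⟨X ⊞ Y, ⟨(biprod.mapIso e1 e2).trans (biprodShuffle A' X B' Y)⟩⟩

lemma subsingleton_V_of_isZero {X : Rep ℂ G} (h : IsZero X) : Subsingleton X.V := by
  refine ⟨fun a b => ?_⟩
  have hz : ∀ v : X.V, v = 0 := fun v => by
    have := congrArg (fun (f : X ⟶ X) => f.hom v) (h.eq_of_src (𝟙 X) 0)
    simpa using this
  rw [hz a, hz b]

lemma isZero_of_subsingleton (X : Rep ℂ G) [Subsingleton X.V] : IsZero X := by
  rw [IsZero.iff_id_eq_zero]
  ext v
  exact Subsingleton.elim _ _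

end ContainsLemmas

section ExtTensorFunctors

variable {W H : Type} [Group W] [Group H] (φ : H →* W × W)

/-- `extTensor φ · E` as a functor. -/
noncomputable def extL (E : Rep.{0} ℂ W) : Rep.{0} ℂ W ⥤ Rep.{0} ℂ H :=
  Rep.resFunctor (MonoidHom.fst W W) ⋙
    tensorRight ((Rep.resFunctor (MonoidHom.snd W W)).obj E) ⋙
    Rep.resFunctor φ

/-- `extTensor φ C ·` as a functor. -/
noncomputable def extR (Cc : Rep.{0} ℂ W) : Rep.{0} ℂ W ⥤ Rep.{0} ℂ H :=
  Rep.resFunctor (MonoidHom.snd W W) ⋙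
    tensorLeft ((Rep.resFunctor (MonoidHom.fst W W)).obj Cc) ⋙
    Rep.resFunctor φ

instance extL_additive (E : Rep ℂ W) : (extL φ E).Additive := by unfold extL; infer_instance

instance extR_additive (Cc : Rep ℂ W) : (extR φ Cc).Additive := by unfold extR; infer_instance

lemma extTensor_isZero_left (Cc E : Rep ℂ W) (h : IsZero Cc) : IsZero (extTensor φ Cc E) := by
  haveI := subsingleton_V_of_isZero h
  haveI : Subsingleton (extTensor φ Cc E).V := by
    show Subsingleton (TensorProduct ℂ Cc.V E.V)
    infer_instance
  exact isZero_of_subsingleton _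

/-- The key decomposition isomorphism. -/
noncomputable def extTensorBiprodIso {G' : Type} [Group G'] (Ind : Rep ℂ H ⥤ Rep ℂ G')
    [Ind.Additive] (A B A' B' : Rep ℂ W) :
    Ind.obj (extTensor φ (A ⊞ B) (A' ⊞ B')) ≅
      (Ind.obj (extTensor φ A A') ⊞ Ind.obj (extTensor φ A B')) ⊞
      (Ind.obj (extTensor φ B A') ⊞ Ind.obj (extTensor φ B B')) :=
  letI := preservesBinaryBiproducts_of_preservesBiproducts (extL φ (A' ⊞ B') ⋙ Ind)
  letI := preservesBinaryBiproducts_of_preservesBiproducts (extR φ A ⋙ Ind)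
  letI := preservesBinaryBiproducts_of_preservesBiproducts (extR φ B ⋙ Ind)
  ((extL φ (A' ⊞ B') ⋙ Ind).mapBiprod A B).trans
    (biprod.mapIso ((extR φ A ⋙ Ind).mapBiprod A' B') ((extR φ B ⋙ Ind).mapBiprod A' B'))

end ExtTensorFunctors

theorem stmt0 (W G : Type) [Group W] [Fintype W] [Group G] [Fintype G]
    (H : Subgroup G) (φ : H →* W × W)
    -- `Ind` is the induction functor from `H` to `G`, i.e. a left adjoint of the
    -- restriction functor along the inclusion `H ≤ G`.
    (Ind : Rep.{0} ℂ H ⥤ Rep.{0} ℂ G)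
    (adj : Ind ⊣ Rep.resFunctor (k := ℂ) H.subtype)
    -- property (♦)
    (hdiamond : ∀ C D : Rep.{0} ℂ W, FiniteDimensional ℂ C.V → FiniteDimensional ℂ D.V →
      Nonempty (Ind.obj (extTensor φ C D) ≅ Ind.obj (extTensor φ D C)))
    -- a sequence `(C_0, …, C_n)` of finite dimensional representations of `W`,
    -- with the convention `C_i = 0` for `i < 0` or `i > n`
    (n : ℕ) (C : ℤ → Rep.{0} ℂ W)
    (hfd : ∀ i, FiniteDimensional ℂ (C i).V)
    (hC : ∀ i : ℤ, i < 0 ∨ (n : ℤ) < i → IsZero (C i))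
    -- `(C_i)` is strongly inductively log-concave with respect to `(G, H, φ)`
    (hSILC : ∀ i j : ℤ, 1 ≤ i → i ≤ j →
      Contains (Ind.obj (extTensor φ (C i) (C j)))
               (Ind.obj (extTensor φ (C (i - 1)) (C (j + 1)))))
    -- the sequence `D_k = C_{k-1} ⊕ C_k`, i.e. the coefficients of `(t+1)·Σ C_i t^i`
    (D : ℤ → Rep.{0} ℂ W) (hD : ∀ k, D k = (C (k - 1) ⊞ C k)) :
    -- `(D_k)` is strongly inductively log-concave with respect to `(G, H, φ)`
    ∀ i j : ℤ, 1 ≤ i → i ≤ j →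
      Contains (Ind.obj (extTensor φ (D i) (D j)))
               (Ind.obj (extTensor φ (D (i - 1)) (D (j + 1)))) := by
  haveI : Ind.Additive := by
    have := adj.leftAdjoint_preservesColimits
    have := preservesBinaryBiproducts_of_preservesBinaryCoproducts Ind
    exact Functor.additive_of_preservesBinaryBiproducts Ind
  intro i j hi hij
  rw [hD i, hD j, hD (i - 1), hD (j + 1), show (j : ℤ) + 1 - 1 = j from by ring]
  refine contains_of_iso (extTensorBiprodIso φ Ind _ _ _ _)
    (contains_iso_right ?_ (extTensorBiprodIso φ Ind _ _ _ _).symm)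
  refine contains_of_iso (biprodShuffle _ _ _ _) ?_
  refine contains_map (contains_map ?ha ?hc) (contains_map ?hb ?hd)
  case hb => exact contains_refl _
  case hd => exact hSILC i j hi hij
  case ha =>
    by_cases h2 : 2 ≤ i
    · have := hSILC (i - 1) (j - 1) (by omega) (by omega)
      rwa [show (j : ℤ) - 1 + 1 = j from by ring] at this
    · exact contains_of_isZero (Ind.map_isZero
        (extTensor_isZero_left φ _ _ (hC _ (Or.inl (by omega)))))
  case hc =>
    by_cases h2 : 2 ≤ i
    · rcases eq_or_lt_of_le hij with rfl | hlt
      · obtain ⟨e⟩ := hdiamond (C i) (C (i - 1)) (hfd _) (hfd _)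
        exact contains_of_iso e (hSILC (i - 1) i (by omega) (by omega))
      · have s1 := hSILC i (j - 1) hi (by omega)
        rw [show (j : ℤ) - 1 + 1 = j from by ring] at s1
        exact contains_trans s1 (hSILC (i - 1) j (by omega) (by omega))
    · exact contains_of_isZero (Ind.map_isZero
        (extTensor_isZero_left φ _ _ (hC _ (Or.inl (by omega)))))
end

section
/- For any integer m ≥ 1, both differences s_{(m+2)} · s_{(3)} + s_{(m+1,2)} · s_{(2)} − s_{(m+1)} · s_{(4)} and s_{(m+1)} · s_{(4)} − s_{(m+5)} are Schur positive. -/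
open MvPolynomial Finset

/-- `ch N k` : the complete homogeneous symmetric polynomial `h_k` in `N` variables,
with the convention `h_0 = 1` and `h_k = 0` for `k < 0`. -/
noncomputable def ch (N : ℕ) (k : ℤ) : MvPolynomial (Fin N) ℤ :=
  if 0 ≤ k then MvPolynomial.hsymm (Fin N) ℤ k.toNat else 0

/-- The skew Schur polynomial `s_{λ/μ}` via the Jacobi–Trudi determinant
`det (h_{λ_i - μ_j - i + j})`, where `μ` is padded with zeros. -/
noncomputable def skewSchur (N : ℕ) (l m : List ℕ) : MvPolynomial (Fin N) ℤ :=
  Matrix.det (Matrix.of fun i j : Fin l.length =>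
    ch N ((l.get i : ℤ) - (m.getD (j : ℕ) 0 : ℤ) - (i : ℤ) + (j : ℤ)))

/-- The Schur polynomial `s_λ` via the Jacobi–Trudi determinant. -/
noncomputable def schur (N : ℕ) (l : List ℕ) : MvPolynomial (Fin N) ℤ :=
  skewSchur N l []

/-- A list of naturals is a partition if it is weakly decreasing. -/
def IsPartition (l : List ℕ) : Prop := l.Pairwise (· ≥ ·)

/-- `f` is Schur positive if it is a nonnegative integer linear combination of
Schur polynomials of partitions. -/
def SchurPos (N : ℕ) (f : MvPolynomial (Fin N) ℤ) : Prop :=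
  ∃ (S : Finset (List ℕ)) (c : List ℕ → ℕ),
    (∀ l ∈ S, IsPartition l) ∧ f = ∑ l ∈ S, (c l : ℤ) • schur N l

/-- The hook partition `(m, 1^a)`. -/
def hook (m a : ℕ) : List ℕ := m :: List.replicate a 1

lemma ch_zero (N : ℕ) : ch N 0 = 1 := by simp [ch]

lemma ch_neg_one (N : ℕ) : ch N (-1) = 0 := by norm_num [ch]

lemma schur_one (N : ℕ) (a : ℕ) : schur N [a] = ch N a := by
  simp [schur, skewSchur, Matrix.det_fin_one]

lemma schur_two (N : ℕ) (a b : ℕ) :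
    schur N [a, b] = ch N a * ch N b - ch N ((a:ℤ) + 1) * ch N ((b : ℤ) - 1) := by
  simp [schur, skewSchur, Matrix.det_fin_two]

lemma schur_three (N : ℕ) (a b c : ℕ) :
    schur N [a, b, c] =
      ch N a * ch N b * ch N c - ch N a * ch N ((b:ℤ)+1) * ch N ((c:ℤ)-1)
      - ch N ((a:ℤ)+1) * ch N ((b:ℤ)-1) * ch N c
      + ch N ((a:ℤ)+1) * ch N ((b:ℤ)+1) * ch N ((c:ℤ)-2)
      + ch N ((a:ℤ)+2) * ch N ((b:ℤ)-1) * ch N ((c:ℤ)-1)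
      - ch N ((a:ℤ)+2) * ch N b * ch N ((c:ℤ)-2) := by
  simp [schur, skewSchur, Matrix.det_fin_three]
  ring_nf

/-- For m ≥ 1, both s_{(m+2)} s_{(3)} + s_{(m+1,2)} s_{(2)} − s_{(m+1)} s_{(4)}
and s_{(m+1)} s_{(4)} − s_{(m+5)} are Schur positive. -/
theorem Um5_chain_schur_positive (N : ℕ) (hN : 1 ≤ N) (m : ℕ) (hm : 1 ≤ m) :
    SchurPos N (schur N [m + 2] * schur N [3] + schur N [m + 1, 2] * schur N [2]
      - schur N [m + 1] * schur N [4]) ∧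
    SchurPos N (schur N [m + 1] * schur N [4] - schur N [m + 5]) := by
  constructor
  · rcases (by omega : m = 1 ∨ 2 ≤ m) with rfl | hm2
    · refine ⟨{[4,2],[3,3],[3,2,1],[2,2,2]}, fun _ => 1, ?_, ?_⟩
      · intro l hl; fin_cases hl <;> simp [IsPartition, List.pairwise_cons]
      · rw [Finset.sum_insert (by decide), Finset.sum_insert (by decide),
          Finset.sum_insert (by decide), Finset.sum_singleton]
        simp only [schur_one, schur_two, schur_three, Nat.cast_one, Nat.cast_ofNat,
          nsmul_eq_mul, Nat.cast_succ]
        norm_num [ch_zero, ch_neg_one]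
        ring
    · refine ⟨{[m+3,2],[m+2,3],[m+2,2,1],[m+1,3,1],[m+1,2,2]}, fun _ => 1, ?_, ?_⟩
      · intro l hl
        simp only [Finset.mem_insert, Finset.mem_singleton] at hl
        rcases hl with rfl|rfl|rfl|rfl|rfl <;> simp [IsPartition, List.pairwise_cons] <;> omega
      · rw [Finset.sum_insert (by
            simp only [Finset.mem_insert, Finset.mem_singleton, List.cons.injEq, not_or]; omega),
          Finset.sum_insert (by
            simp only [Finset.mem_insert, Finset.mem_singleton, List.cons.injEq, not_or]; omega),
          Finset.sum_insert (by
            simp only [Finset.mem_insert, Finset.mem_singleton, List.cons.injEq, not_or]; omega),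
          Finset.sum_insert (by
            simp only [Finset.mem_insert, Finset.mem_singleton, List.cons.injEq, not_or]; omega),
          Finset.sum_singleton]
        simp only [schur_one, schur_two, schur_three, nsmul_eq_mul, Nat.cast_one]
        push_cast
        norm_num [ch_zero, ch_neg_one]
        ring_nf
  · rcases (by omega : m = 1 ∨ m = 2 ∨ 3 ≤ m) with rfl | rfl | hm3
    · refine ⟨{[5,1],[4,2]}, fun _ => 1, ?_, ?_⟩
      · intro l hl; fin_cases hl <;> simp [IsPartition, List.pairwise_cons]
      · rw [Finset.sum_insert (by decide), Finset.sum_singleton]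
        simp only [schur_one, schur_two, nsmul_eq_mul, Nat.cast_one]
        norm_num [ch_zero, ch_neg_one]
        ring
    · refine ⟨{[6,1],[5,2],[4,3]}, fun _ => 1, ?_, ?_⟩
      · intro l hl; fin_cases hl <;> simp [IsPartition, List.pairwise_cons]
      · rw [Finset.sum_insert (by decide), Finset.sum_insert (by decide),
          Finset.sum_singleton]
        simp only [schur_one, schur_two, nsmul_eq_mul, Nat.cast_one]
        norm_num [ch_zero, ch_neg_one]
        ring
    · refine ⟨{[m+4,1],[m+3,2],[m+2,3],[m+1,4]}, fun _ => 1, ?_, ?_⟩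
      · intro l hl
        simp only [Finset.mem_insert, Finset.mem_singleton] at hl
        rcases hl with rfl|rfl|rfl|rfl <;> simp [IsPartition, List.pairwise_cons] <;> omega
      · rw [Finset.sum_insert (by
            simp only [Finset.mem_insert, Finset.mem_singleton, List.cons.injEq, not_or]; omega),
          Finset.sum_insert (by
            simp only [Finset.mem_insert, Finset.mem_singleton, List.cons.injEq, not_or]; omega),
          Finset.sum_insert (by
            simp only [Finset.mem_insert, Finset.mem_singleton, List.cons.injEq, not_or]; omega),
          Finset.sum_singleton]
        simp only [schur_one, schur_two, nsmul_eq_mul, Nat.cast_one]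
        push_cast
        norm_num [ch_zero, ch_neg_one]
        ring_nf
end
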